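/- For every γ = (γ₁,γ₂) ∈ ℝ², the series e^{−|γ|²/(4ℓ²)} · Σ_{m=0}^{∞} (1/√(m!)) · ((γ₁ + i·γ₂)/(ℓ·√2))^m · ψ_m converges in L²(ℝ²) and its sum equals χ_γ. -/

import Mathlib

open MeasureTheory Filter Topology

/-- The normalized lowest-Landau-level wave function `ψ_m` (angular momentum `m`),
`ψ_m(x) = (1/(ℓ√(2π m!))) ((x₁ - i x₂)/(ℓ√2))^m e^{-|x|²/(4ℓ²)}`. -/
noncomputable def psiF (ℓ : ℝ) (m : ℕ) (x : EuclideanSpace ℝ (Fin 2)) : ℂ :=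
  ((1 / (ℓ * Real.sqrt (2 * Real.pi * m.factorial)) : ℝ) : ℂ) *
    (((x 0 : ℂ) - Complex.I * (x 1 : ℂ)) / ((ℓ : ℂ) * ((Real.sqrt 2 : ℝ) : ℂ))) ^ m *
    ((Real.exp (-‖x‖ ^ 2 / (4 * ℓ ^ 2)) : ℝ) : ℂ)

/-- The magnetic coherent state `χ_γ` centred at `γ`,
`χ_γ(x) = (1/(ℓ√(2π))) e^{-i(γ∧x)/(2ℓ²)} e^{-|x-γ|²/(4ℓ²)}`. -/
noncomputable def chiF (ℓ : ℝ) (γ x : EuclideanSpace ℝ (Fin 2)) : ℂ :=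
  ((1 / (ℓ * Real.sqrt (2 * Real.pi)) : ℝ) : ℂ) *
    Complex.exp (-Complex.I * ((γ 0 * x 1 - γ 1 * x 0 : ℝ) : ℂ) / (2 * (ℓ : ℂ) ^ 2)) *
    ((Real.exp (-‖x - γ‖ ^ 2 / (4 * ℓ ^ 2)) : ℝ) : ℂ)

/-! With `ζ(x) = (x₁ - i x₂)/(ℓ√2)` one has `ψ_m ∝ ζ^m e^{-|x|²/(4ℓ²)}` and
`χ_γ(x) = e^{-|γ|²/(4ℓ²)} (ℓ√(2π))⁻¹ e^{-|x|²/(4ℓ²)} exp(conj ζ(γ) ζ(x))`, so expanding the last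
exponential gives the series pointwise. The bound `t^m/m! ≤ 2^{-m} e^{2t}` dominates its `m`-th term
by `2^{-m}` times a fixed square-integrable function, so the series converges absolutely in `L²`.
A subsequence of its partial sums converges almost everywhere, hence the `L²` sum is `χ_γ`. -/

open scoped ENNReal

namespace MeasureTheory.Lp

variable {α E : Type*} {m : MeasurableSpace α} {μ : Measure α} {p : ℝ≥0∞}
  [NormedAddCommGroup E]

theorem coeFn_finset_sum {ι : Type*} (s : Finset ι) (f : ι → Lp E p μ) :
    ⇑(∑ i ∈ s, f i) =ᵐ[μ] ∑ i ∈ s, ⇑(f i) := by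
  classical
  induction s using Finset.induction_on with
  | empty => simpa using Lp.coeFn_zero E p μ
  | insert i s hi ih =>
    rw [Finset.sum_insert hi, Finset.sum_insert hi]
    exact (Lp.coeFn_add _ _).trans ((EventuallyEq.refl _ _).add ih)

theorem hasSum_of_summable_norm_of_ae_hasSum [Fact (1 ≤ p)] [CompleteSpace E]
    {f : ℕ → Lp E p μ} {g : Lp E p μ} (hf : Summable (‖f ·‖))
    (hfg : ∀ᵐ x ∂μ, HasSum (fun n => f n x) (g x)) : HasSum f g := by
  obtain ⟨S, hS⟩ := hf.of_norm
  suffices S = g by rwa [← this]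
  obtain ⟨ns, hns, hS_ae⟩ :=
    (tendstoInMeasure_of_tendsto_Lp hS.tendsto_sum_nat).exists_seq_tendsto_ae
  have hpartial : ∀ᵐ x ∂μ, ∀ n, (∑ i ∈ Finset.range n, f i) x = ∑ i ∈ Finset.range n, f i x :=
    ae_all_iff.2 fun n => (coeFn_finset_sum _ f).trans (.of_forall fun x => Finset.sum_apply ..)
  refine Lp.ext ?_
  filter_upwards [hS_ae, hfg, hpartial] with x hxS hxg hx
  simp only [hx] at hxS
  exact tendsto_nhds_unique hxS (hxg.tendsto_sum_nat.comp hns.tendsto_atTop)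

end MeasureTheory.Lp

section Gaussian

variable {V : Type*} [NormedAddCommGroup V] [InnerProductSpace ℝ V] [FiniteDimensional ℝ V]
  [MeasurableSpace V] [BorelSpace V]

theorem integrable_exp_neg_mul_sq_norm {c : ℝ} (hc : 0 < c) :
    Integrable fun x : V => Real.exp (-c * ‖x‖ ^ 2) := by
  refine (GaussianFourier.integrable_cexp_neg_mul_sq_norm_add (V := V) (b := c)
    (by simpa using hc) 0 0).norm.congr (.of_forall fun x => ?_)
  simp [Complex.norm_exp, ← Complex.ofReal_pow]

theorem integrable_exp_mul_norm_sub_mul_sq_norm (b : ℝ) {c : ℝ} (hc : 0 < c) :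
    Integrable fun x : V => Real.exp (b * ‖x‖ - c * ‖x‖ ^ 2) := by
  refine ((integrable_exp_neg_mul_sq_norm (half_pos hc)).const_mul
    (Real.exp (b ^ 2 / (2 * c)))).mono' (by fun_prop) (.of_forall fun x => ?_)
  rw [Real.norm_of_nonneg (Real.exp_pos _).le, ← Real.exp_add, Real.exp_le_exp]
  have hsquare : b * ‖x‖ - c * ‖x‖ ^ 2 =
      b ^ 2 / (2 * c) + -(c / 2) * ‖x‖ ^ 2 - c / 2 * (‖x‖ - b / c) ^ 2 := by
    field_simp
    ring
  linarith [hsquare, (by positivity : 0 ≤ c / 2 * (‖x‖ - b / c) ^ 2)]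

theorem memLp_two_exp_mul_norm_sub_mul_sq_norm (b : ℝ) {c : ℝ} (hc : 0 < c) :
    MemLp (fun x : V => Real.exp (b * ‖x‖ - c * ‖x‖ ^ 2)) 2 := by
  refine (memLp_two_iff_integrable_sq (by fun_prop)).2 ?_
  refine (integrable_exp_mul_norm_sub_mul_sq_norm (2 * b) (mul_pos two_pos hc)).congr
    (.of_forall fun x => ?_)
  simp only [← Real.exp_nat_mul]
  ring_nf

end Gaussian

section Landau

noncomputable def landauCoord (ℓ : ℝ) (x : EuclideanSpace ℝ (Fin 2)) : ℂ :=
  ((x 0 : ℂ) - Complex.I * (x 1 : ℂ)) / ((ℓ : ℂ) * ((Real.sqrt 2 : ℝ) : ℂ))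

noncomputable def coherentCoeff (ℓ : ℝ) (γ : EuclideanSpace ℝ (Fin 2)) (m : ℕ) : ℂ :=
  ((Real.exp (-‖γ‖ ^ 2 / (4 * ℓ ^ 2)) : ℝ) : ℂ) * ((1 / Real.sqrt m.factorial : ℝ) : ℂ) *
    (((γ 0 : ℂ) + Complex.I * (γ 1 : ℂ)) / ((ℓ : ℂ) * ((Real.sqrt 2 : ℝ) : ℂ))) ^ m

noncomputable def coherentEnvelope (ℓ : ℝ) (γ x : EuclideanSpace ℝ (Fin 2)) : ℝ :=
  Real.exp (-‖γ‖ ^ 2 / (4 * ℓ ^ 2)) / (ℓ * Real.sqrt (2 * Real.pi)) *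
    Real.exp (-‖x‖ ^ 2 / (4 * ℓ ^ 2))

theorem EuclideanSpace.norm_sq_fin_two (x : EuclideanSpace ℝ (Fin 2)) :
    ‖x‖ ^ 2 = x 0 ^ 2 + x 1 ^ 2 := by
  simp [EuclideanSpace.norm_sq_eq, Fin.sum_univ_two]

theorem conj_landauCoord (ℓ : ℝ) (γ : EuclideanSpace ℝ (Fin 2)) :
    starRingEnd ℂ (landauCoord ℓ γ) =
      ((γ 0 : ℂ) + Complex.I * (γ 1 : ℂ)) / ((ℓ : ℂ) * ((Real.sqrt 2 : ℝ) : ℂ)) := by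
  simp [landauCoord, sub_eq_add_neg]

theorem norm_landauCoord (ℓ : ℝ) (x : EuclideanSpace ℝ (Fin 2)) :
    ‖landauCoord ℓ x‖ = ‖x‖ / (|ℓ| * Real.sqrt 2) := by
  have hnum : ‖(x 0 : ℂ) - Complex.I * (x 1 : ℂ)‖ = ‖x‖ := by
    rw [← sq_eq_sq₀ (norm_nonneg _) (norm_nonneg _), Complex.sq_norm, Complex.normSq_apply,
      EuclideanSpace.norm_sq_fin_two]
    simp only [Complex.sub_re, Complex.ofReal_re, Complex.mul_re, Complex.I_re, Complex.I_im,
      Complex.ofReal_im, Complex.sub_im, Complex.mul_im]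
    ring
  rw [landauCoord, norm_div, hnum, norm_mul, Complex.norm_real, Complex.norm_real,
    Real.norm_eq_abs, Real.norm_of_nonneg (Real.sqrt_nonneg _)]

theorem coherentCoeff_mul_psiF (ℓ : ℝ) (γ x : EuclideanSpace ℝ (Fin 2)) (m : ℕ) :
    coherentCoeff ℓ γ m * psiF ℓ m x =
      coherentEnvelope ℓ γ x * (starRingEnd ℂ (landauCoord ℓ γ) * landauCoord ℓ x) ^ m /
        m.factorial := by
  have hnormalize : 1 / Real.sqrt m.factorial * (1 / (ℓ * Real.sqrt (2 * Real.pi * m.factorial)))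
      = 1 / (ℓ * Real.sqrt (2 * Real.pi)) / m.factorial := by
    rw [Real.sqrt_mul (by positivity), one_div_mul_one_div, div_div, one_div, one_div]
    congr 1
    linear_combination (ℓ * Real.sqrt (2 * Real.pi)) *
      Real.mul_self_sqrt (Nat.cast_nonneg (α := ℝ) m.factorial)
  have hnormalizeℂ := congrArg (fun r : ℝ => (r : ℂ)) hnormalize
  rw [coherentCoeff, psiF, coherentEnvelope, conj_landauCoord, ← landauCoord, mul_pow]
  generalize Real.exp (-‖γ‖ ^ 2 / (4 * ℓ ^ 2)) = E
  generalize Real.exp (-‖x‖ ^ 2 / (4 * ℓ ^ 2)) = G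
  push_cast at hnormalizeℂ ⊢
  linear_combination ((E : ℂ) * G *
    (((γ 0 : ℂ) + Complex.I * (γ 1 : ℂ)) / ((ℓ : ℂ) * ((Real.sqrt 2 : ℝ) : ℂ))) ^ m *
    landauCoord ℓ x ^ m) * hnormalizeℂ

theorem chiF_eq_coherentEnvelope_mul_exp {ℓ : ℝ} (hℓ : ℓ ≠ 0) (γ x : EuclideanSpace ℝ (Fin 2)) :
    chiF ℓ γ x = coherentEnvelope ℓ γ x *
      Complex.exp (starRingEnd ℂ (landauCoord ℓ γ) * landauCoord ℓ x) := by
  have hsq : ‖x - γ‖ ^ 2 = ‖x‖ ^ 2 + ‖γ‖ ^ 2 - 2 * (γ 0 * x 0 + γ 1 * x 1) := by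
    simp only [EuclideanSpace.norm_sq_fin_two, PiLp.sub_apply]
    ring
  have hexponent :
      -Complex.I * ((γ 0 * x 1 - γ 1 * x 0 : ℝ) : ℂ) / (2 * (ℓ : ℂ) ^ 2) +
          ((-‖x - γ‖ ^ 2 / (4 * ℓ ^ 2) : ℝ) : ℂ) =
        ((-‖γ‖ ^ 2 / (4 * ℓ ^ 2) : ℝ) : ℂ) + ((-‖x‖ ^ 2 / (4 * ℓ ^ 2) : ℝ) : ℂ) +
          starRingEnd ℂ (landauCoord ℓ γ) * landauCoord ℓ x := by
    have hsqrt2 : ((Real.sqrt 2 : ℝ) : ℂ) ^ 2 = 2 := by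
      exact_mod_cast Real.sq_sqrt zero_le_two
    have hℓℂ : (ℓ : ℂ) ≠ 0 := by exact_mod_cast hℓ
    rw [conj_landauCoord, landauCoord, hsq]
    push_cast
    field_simp
    rw [hsqrt2]
    linear_combination (8 * (γ 1 : ℂ) * x 1) * Complex.I_sq
  calc chiF ℓ γ x = ((1 / (ℓ * Real.sqrt (2 * Real.pi)) : ℝ) : ℂ) *
        Complex.exp (-Complex.I * ((γ 0 * x 1 - γ 1 * x 0 : ℝ) : ℂ) / (2 * (ℓ : ℂ) ^ 2) +
          ((-‖x - γ‖ ^ 2 / (4 * ℓ ^ 2) : ℝ) : ℂ)) := by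
        rw [chiF, Complex.exp_add, Complex.ofReal_exp, mul_assoc]
    _ = _ := by
        rw [hexponent, coherentEnvelope, Complex.exp_add, Complex.exp_add]
        push_cast
        ring

theorem hasSum_coherentCoeff_mul_psiF {ℓ : ℝ} (hℓ : ℓ ≠ 0) (γ x : EuclideanSpace ℝ (Fin 2)) :
    HasSum (fun m => coherentCoeff ℓ γ m * psiF ℓ m x) (chiF ℓ γ x) := by
  rw [chiF_eq_coherentEnvelope_mul_exp hℓ, Complex.exp_eq_exp_ℂ]
  simpa only [coherentCoeff_mul_psiF, mul_div_assoc] using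
    (NormedSpace.expSeries_div_hasSum_exp _).mul_left (coherentEnvelope ℓ γ x : ℂ)

theorem pow_div_factorial_le_half_pow_mul_exp {t : ℝ} (ht : 0 ≤ t) (m : ℕ) :
    t ^ m / m.factorial ≤ (1 / 2) ^ m * Real.exp (2 * t) := by
  calc t ^ m / m.factorial = (1 / 2) ^ m * ((2 * t) ^ m / m.factorial) := by
        rw [mul_pow, ← mul_div_assoc, ← mul_assoc, ← mul_pow]
        norm_num
    _ ≤ (1 / 2) ^ m * Real.exp (2 * t) := by
        gcongr
        exact Real.pow_div_factorial_le_exp _ (by positivity) m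

theorem norm_coherentCoeff_mul_psiF_le (ℓ : ℝ) (γ x : EuclideanSpace ℝ (Fin 2)) (m : ℕ) :
    ‖coherentCoeff ℓ γ m * psiF ℓ m x‖ ≤ (1 / 2) ^ m *
      (|coherentEnvelope ℓ γ x| * Real.exp (2 * (‖landauCoord ℓ γ‖ * ‖landauCoord ℓ x‖))) := by
  rw [coherentCoeff_mul_psiF, mul_div_assoc, norm_mul, norm_div, norm_pow, norm_mul,
    Complex.norm_conj, Complex.norm_real, Complex.norm_natCast, Real.norm_eq_abs,
    mul_left_comm]
  gcongr
  exact pow_div_factorial_le_half_pow_mul_exp (by positivity) m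

theorem memLp_two_coherentEnvelope_mul_exp {ℓ : ℝ} (hℓ : ℓ ≠ 0) (γ : EuclideanSpace ℝ (Fin 2)) :
    MemLp (fun x => |coherentEnvelope ℓ γ x| *
      Real.exp (2 * (‖landauCoord ℓ γ‖ * ‖landauCoord ℓ x‖))) 2 := by
  have hdecay : (fun x => |coherentEnvelope ℓ γ x| *
        Real.exp (2 * (‖landauCoord ℓ γ‖ * ‖landauCoord ℓ x‖))) =
      fun x => |Real.exp (-‖γ‖ ^ 2 / (4 * ℓ ^ 2)) / (ℓ * Real.sqrt (2 * Real.pi))| *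
        Real.exp (2 * ‖landauCoord ℓ γ‖ / (|ℓ| * Real.sqrt 2) * ‖x‖ -
          1 / (4 * ℓ ^ 2) * ‖x‖ ^ 2) := by
    funext x
    rw [coherentEnvelope, abs_mul, abs_of_pos (Real.exp_pos _), mul_assoc, ← Real.exp_add,
      norm_landauCoord ℓ x]
    ring_nf
  rw [hdecay]
  exact (memLp_two_exp_mul_norm_sub_mul_sq_norm _ (by positivity)).const_mul _

theorem coeFn_coherentCoeff_smul {ℓ : ℝ} (γ : EuclideanSpace ℝ (Fin 2))
    {Ψ : ℕ → Lp ℂ 2 (volume : Measure (EuclideanSpace ℝ (Fin 2)))}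
    (hΨ : ∀ m, ⇑(Ψ m) =ᵐ[volume] psiF ℓ m) (m : ℕ) :
    ⇑(coherentCoeff ℓ γ m • Ψ m) =ᵐ[volume] fun x => coherentCoeff ℓ γ m * psiF ℓ m x :=
  (Lp.coeFn_smul _ _).trans ((hΨ m).const_smul _)

theorem summable_norm_coherentCoeff_smul {ℓ : ℝ} (hℓ : ℓ ≠ 0) (γ : EuclideanSpace ℝ (Fin 2))
    {Ψ : ℕ → Lp ℂ 2 (volume : Measure (EuclideanSpace ℝ (Fin 2)))}
    (hΨ : ∀ m, ⇑(Ψ m) =ᵐ[volume] psiF ℓ m) :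
    Summable fun m => ‖coherentCoeff ℓ γ m • Ψ m‖ := by
  have hG := memLp_two_coherentEnvelope_mul_exp hℓ γ
  refine .of_nonneg_of_le (fun _ => norm_nonneg _) (fun m => ?_)
    (summable_geometric_two.mul_right ‖hG.toLp _‖)
  refine Lp.norm_le_mul_norm_of_ae_le_mul ?_
  filter_upwards [coeFn_coherentCoeff_smul γ hΨ m, hG.coeFn_toLp] with x hterm hGx
  rw [hterm, hGx, Real.norm_of_nonneg (by positivity)]
  exact norm_coherentCoeff_mul_psiF_le ℓ γ x m

end Landau

/-- For every `γ ∈ ℝ²` the expansion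
`χ_γ = e^{-|γ|²/(4ℓ²)} Σ_m (1/√m!) ((γ₁+iγ₂)/(ℓ√2))^m ψ_m`
holds, the series converging in `L²(ℝ²)`. -/
theorem stmt_9 (ℓ : ℝ) (hℓ : 0 < ℓ)
    (Ψ : ℕ → Lp ℂ 2 (volume : Measure (EuclideanSpace ℝ (Fin 2))))
    (hΨ : ∀ m : ℕ, ⇑(Ψ m) =ᵐ[volume] psiF ℓ m)
    (X : EuclideanSpace ℝ (Fin 2) → Lp ℂ 2 (volume : Measure (EuclideanSpace ℝ (Fin 2))))
    (hX : ∀ γ : EuclideanSpace ℝ (Fin 2), ⇑(X γ) =ᵐ[volume] chiF ℓ γ)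
    (γ : EuclideanSpace ℝ (Fin 2)) :
    HasSum (fun m : ℕ =>
      (((Real.exp (-‖γ‖ ^ 2 / (4 * ℓ ^ 2)) : ℝ) : ℂ) *
        ((1 / Real.sqrt m.factorial : ℝ) : ℂ) *
        (((γ 0 : ℂ) + Complex.I * (γ 1 : ℂ)) / ((ℓ : ℂ) * ((Real.sqrt 2 : ℝ) : ℂ))) ^ m) •
          Ψ m)
      (X γ) := by
  show HasSum (fun m => coherentCoeff ℓ γ m • Ψ m) (X γ)
  refine Lp.hasSum_of_summable_norm_of_ae_hasSum
    (summable_norm_coherentCoeff_smul hℓ.ne' γ hΨ) ?_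
  filter_upwards [ae_all_iff.2 (coeFn_coherentCoeff_smul γ hΨ), hX γ] with x hterms hχ
  simp only [hterms, hχ]
  exact hasSum_coherentCoeff_mul_psiF hℓ.ne' γ x
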